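/- Let λ ∈ (1/2, (√5 − 1)/2). Then there exists m ∈ ℕ such that λ + λ² + ⋯ + λ^m ≥ 1, and for any such m the equilibrium measure of the overlap satisfies μ_λ( τ₀(X_λ) ∩ τ₁(X_λ) ) = μ_λ([λ, λ²/(1−λ)]) ≥ 1/(2^m − 1). -/

import Mathlib

/-!
Put `T = λ/(1-λ)`, so that `π_λ` takes values in `[0, T]`, and `c = μ_λ[1, T]`. The
self-similarity `μ_λ = ½ (τ₀)_* μ_λ + ½ (τ₁)_* μ_λ`, which comes from splitting `Ω` according to
the first digit, reads `2 f(t) = f(t/λ) + f(t/λ - 1)` for `f(t) = μ_λ[t, ∞)`. Iterating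
`f(t) ≥ f(t/λ - 1)/2` from `t = 1` for `m - 1` steps and then using both terms (one threshold is
`≤ 0`, the other `≤ 1` precisely because `λ + ⋯ + λ^m ≥ 1`) gives `2^m c ≥ 1 + c`.
The overlap `[λ, λT]` contains `τ₀[1, T]` and `τ₁[0, T - 1]`, and flipping every digit maps `π_λ`
to `T - π_λ`, so `μ_λ[0, T - 1] = c`; hence the overlap has measure at least `c`.
-/

open MeasureTheory ENNReal

lemma ENNReal.one_div_sub_one_le_of_one_add_le_mul {a c : ℝ≥0∞} (hc : c ≠ ∞)
    (h : 1 + c ≤ a * c) : 1 / (a - 1) ≤ c := by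
  refine ENNReal.div_le_of_le_mul' ?_
  rw [ENNReal.sub_mul fun _ _ => hc, one_mul]
  exact ENNReal.le_sub_of_add_le_right hc h

lemma Finset.sum_range_succ_pow_succ {R : Type*} [CommSemiring R] (x : R) (n : ℕ) :
    ∑ i ∈ range (n + 1), x ^ (i + 1) = x * (1 + ∑ i ∈ range n, x ^ (i + 1)) := by
  rw [sum_range_succ', mul_add, mul_sum]
  simp only [pow_succ']
  ring

namespace BernoulliConvolution

open Set

section PrefixCylinder

variable {α : Type*}

def prefixCylinder (n : ℕ) (w : Fin n → α) : Set (ℕ → α) := {ω | ∀ k : Fin n, ω k = w k}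

def prefixCylinders : Set (Set (ℕ → α)) := {s | ∃ n w, s = prefixCylinder n w}

lemma prefixCylinder_zero (w : Fin 0 → α) : prefixCylinder 0 w = univ := by
  ext ω; simp [prefixCylinder]

lemma prefixCylinder_subset {n n' : ℕ} (h : n ≤ n') {w : Fin n → α} {w' : Fin n' → α}
    {ω : ℕ → α} (hω : ω ∈ prefixCylinder n w) (hω' : ω ∈ prefixCylinder n' w') :
    prefixCylinder n' w' ⊆ prefixCylinder n w := fun _ h'' k =>
  (h'' (Fin.castLE h k)).trans ((hω' _).symm.trans (hω k))

lemma isPiSystem_prefixCylinders : IsPiSystem (prefixCylinders (α := α)) := by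
  rintro _ ⟨n, w, rfl⟩ _ ⟨n', w', rfl⟩ ⟨ω, hω, hω'⟩
  rcases le_total n n' with h | h
  · exact ⟨n', w', inter_eq_right.2 (prefixCylinder_subset h hω hω')⟩
  · exact ⟨n, w, inter_eq_left.2 (prefixCylinder_subset h hω' hω)⟩

lemma preimage_eval_singleton_eq_biUnion (i : ℕ) (a : α) :
    (fun ω : ℕ → α => ω i) ⁻¹' {a} =
      ⋃ w ∈ {w : Fin (i + 1) → α | w (Fin.last i) = a}, prefixCylinder (i + 1) w := by
  ext ω
  simp only [mem_preimage, mem_singleton_iff, mem_iUnion, mem_ofPred_eq, exists_prop]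
  refine ⟨fun h => ⟨fun k => ω k, h, fun k => rfl⟩, fun ⟨w, hw, hω⟩ => ?_⟩
  simpa [hw] using hω (Fin.last i)

variable [MeasurableSpace α] [MeasurableSingletonClass α]

lemma measurableSet_prefixCylinder (n : ℕ) (w : Fin n → α) :
    MeasurableSet (prefixCylinder n w) := by
  simp only [prefixCylinder, ofPred_forall]
  exact .iInter fun k => measurable_pi_apply _ (measurableSet_singleton _)

variable [Countable α]

lemma generateFrom_prefixCylinders :
    MeasurableSpace.generateFrom (prefixCylinders (α := α)) = MeasurableSpace.pi := by
  refine le_antisymm (MeasurableSpace.generateFrom_le ?_) (iSup_le fun i => ?_)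
  · rintro _ ⟨n, w, rfl⟩
    exact measurableSet_prefixCylinder n w
  · refine measurable_iff_comap_le.1
      (@measurable_to_countable' _ _ _ _ (.generateFrom prefixCylinders) _ fun a => ?_)
    rw [preimage_eval_singleton_eq_biUnion]
    exact .biUnion (to_countable _) fun w _ => .basic _ ⟨i + 1, w, rfl⟩

lemma ext_of_prefixCylinder {μ ν : Measure (ℕ → α)} [IsFiniteMeasure μ]
    (h : ∀ n w, μ (prefixCylinder n w) = ν (prefixCylinder n w)) : μ = ν := by
  refine ext_of_generate_finite _ generateFrom_prefixCylinders.symm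
    isPiSystem_prefixCylinders (fun _ ⟨n, w, hs⟩ => hs ▸ h n w) ?_
  simpa only [prefixCylinder_zero] using h 0 Fin.elim0

end PrefixCylinder

def IsFairCoinMeasure (P : Measure (ℕ → Bool)) : Prop :=
  ∀ n w, P (prefixCylinder n w) = (1 / 2) ^ n

def shift {α : Type*} (ω : ℕ → α) : ℕ → α := fun k => ω (k + 1)

def flipDigits (ω : ℕ → Bool) : ℕ → Bool := fun k => !ω k

lemma measurable_shift {α : Type*} [MeasurableSpace α] : Measurable (shift (α := α)) :=
  measurable_pi_lambda _ fun k => measurable_pi_apply (k + 1)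

lemma measurable_flipDigits : Measurable flipDigits :=
  measurable_pi_lambda _ fun k => measurable_from_top.comp (measurable_pi_apply k)

lemma shift_preimage_prefixCylinder_inter (n : ℕ) (w : Fin n → Bool) (b : Bool) :
    shift ⁻¹' prefixCylinder n w ∩ {ω | ω 0 = b} = prefixCylinder (n + 1) (Fin.cons b w) := by
  ext ω
  simp only [prefixCylinder, mem_inter_iff, mem_preimage, mem_ofPred_eq, Fin.forall_fin_succ,
    Fin.cons_zero, Fin.cons_succ, Fin.val_zero, Fin.val_succ, shift]
  exact and_comm

lemma flipDigits_preimage_prefixCylinder (n : ℕ) (w : Fin n → Bool) :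
    flipDigits ⁻¹' prefixCylinder n w = prefixCylinder n (fun k => !w k) := by
  ext ω
  simp [prefixCylinder, flipDigits, Bool.not_eq_eq_eq_not]

namespace IsFairCoinMeasure

variable {P : Measure (ℕ → Bool)} (hP : IsFairCoinMeasure P)
include hP

lemma isProbabilityMeasure : IsProbabilityMeasure P :=
  ⟨by simpa [prefixCylinder_zero] using hP 0 Fin.elim0⟩

lemma map_shift_restrict_head (b : Bool) :
    (P.restrict {ω | ω 0 = b}).map shift = (2⁻¹ : ℝ≥0∞) • P := by
  have := hP.isProbabilityMeasure
  refine ext_of_prefixCylinder fun n w => ?_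
  rw [Measure.map_apply measurable_shift (measurableSet_prefixCylinder n w),
    Measure.restrict_apply (measurable_shift (measurableSet_prefixCylinder n w)),
    shift_preimage_prefixCylinder_inter, hP, Measure.smul_apply, hP, smul_eq_mul, pow_succ',
    one_div]

lemma measure_shift_preimage_inter_head (b : Bool) {E : Set (ℕ → Bool)} (hE : MeasurableSet E) :
    P (shift ⁻¹' E ∩ {ω | ω 0 = b}) = P E / 2 := by
  rw [← Measure.restrict_apply (measurable_shift hE), ← Measure.map_apply measurable_shift hE,
    hP.map_shift_restrict_head, Measure.smul_apply, smul_eq_mul, ENNReal.div_eq_inv_mul]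

lemma measure_flipDigits_preimage {E : Set (ℕ → Bool)} (hE : MeasurableSet E) :
    P (flipDigits ⁻¹' E) = P E := by
  have := hP.isProbabilityMeasure
  have hmap : P.map flipDigits = P := ext_of_prefixCylinder fun n w => by
    rw [Measure.map_apply measurable_flipDigits (measurableSet_prefixCylinder n w),
      flipDigits_preimage_prefixCylinder, hP, hP]
  rw [← Measure.map_apply measurable_flipDigits hE, hmap]

end IsFairCoinMeasure

section Coding

variable {l : ℝ}

-- `ω k` is the paper's digit `ω_(k+1)`, so `coding l` is `π_λ`.
noncomputable def coding (l : ℝ) (ω : ℕ → Bool) : ℝ := ∑' k, if ω k then l ^ (k + 1) else 0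

lemma hasSum_pow_succ (h0 : 0 ≤ l) (h1 : l < 1) :
    HasSum (fun k : ℕ => l ^ (k + 1)) (l / (1 - l)) := by
  simpa only [pow_succ', div_eq_mul_inv] using (hasSum_geometric_of_lt_one h0 h1).mul_left l

lemma exists_one_le_sum_pow_succ (hl : 1 / 2 < l) (h1 : l < 1) :
    ∃ m : ℕ, 1 ≤ ∑ i ∈ Finset.range m, l ^ (i + 1) :=
  ((hasSum_pow_succ (by linarith) h1).tendsto_sum_nat.eventually_const_le
    ((lt_div_iff₀ (by linarith)).2 (by linarith))).exists

lemma digit_term_nonneg (h0 : 0 ≤ l) (ω : ℕ → Bool) (k : ℕ) :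
    0 ≤ if ω k then l ^ (k + 1) else 0 := by
  split_ifs <;> positivity

lemma digit_term_le (h0 : 0 ≤ l) (ω : ℕ → Bool) (k : ℕ) :
    (if ω k then l ^ (k + 1) else 0) ≤ l ^ (k + 1) := by
  split_ifs <;> first | rfl | positivity

lemma summable_digit_term (h0 : 0 ≤ l) (h1 : l < 1) (ω : ℕ → Bool) :
    Summable fun k => if ω k then l ^ (k + 1) else 0 :=
  .of_nonneg_of_le (digit_term_nonneg h0 ω) (digit_term_le h0 ω) (hasSum_pow_succ h0 h1).summable

lemma coding_nonneg (h0 : 0 ≤ l) (ω : ℕ → Bool) : 0 ≤ coding l ω :=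
  tsum_nonneg (digit_term_nonneg h0 ω)

lemma coding_le (h0 : 0 ≤ l) (h1 : l < 1) (ω : ℕ → Bool) : coding l ω ≤ l / (1 - l) :=
  (summable_digit_term h0 h1 ω).tsum_le_tsum (digit_term_le h0 ω) (hasSum_pow_succ h0 h1).summable
    |>.trans_eq (hasSum_pow_succ h0 h1).tsum_eq

lemma coding_eq_head (h0 : 0 ≤ l) (h1 : l < 1) (ω : ℕ → Bool) :
    coding l ω = l * (coding l (shift ω) + if ω 0 then 1 else 0) := by
  rw [coding, (summable_digit_term h0 h1 ω).tsum_eq_zero_add, coding, mul_add, ← tsum_mul_left,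
    add_comm]
  congr 1
  · exact tsum_congr fun k => by cases h : ω (k + 1) <;> simp [shift, h, pow_succ']
  · split_ifs <;> simp

lemma coding_flipDigits (h0 : 0 ≤ l) (h1 : l < 1) (ω : ℕ → Bool) :
    coding l (flipDigits ω) = l / (1 - l) - coding l ω := by
  rw [← (hasSum_pow_succ h0 h1).tsum_eq, coding, coding,
    ← (hasSum_pow_succ h0 h1).summable.tsum_sub (summable_digit_term h0 h1 ω)]
  exact tsum_congr fun k => by cases h : ω k <;> simp [flipDigits, h]

lemma continuous_coding (h0 : 0 ≤ l) (h1 : l < 1) : Continuous (coding l) :=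
  continuous_tsum (fun k =>
    (continuous_of_discreteTopology (f := fun b : Bool => if b then l ^ (k + 1) else 0)).comp
      (continuous_apply k))
    (hasSum_pow_succ h0 h1).summable fun k ω => by
      rw [Real.norm_of_nonneg (digit_term_nonneg h0 ω k)]
      exact digit_term_le h0 ω k

lemma measurable_coding (h0 : 0 ≤ l) (h1 : l < 1) : Measurable (coding l) :=
  (continuous_coding h0 h1).measurable

end Coding

section Measure

variable {l : ℝ} {P : Measure (ℕ → Bool)}

lemma coding_preimage_eq_union (h0 : 0 ≤ l) (h1 : l < 1) (B : Set ℝ) :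
    coding l ⁻¹' B =
      shift ⁻¹' (coding l ⁻¹' ((fun x => l * x) ⁻¹' B)) ∩ {ω | ω 0 = false} ∪
        shift ⁻¹' (coding l ⁻¹' ((fun x => l * (x + 1)) ⁻¹' B)) ∩ {ω | ω 0 = true} := by
  ext ω
  cases h : ω 0 <;> simp [coding_eq_head h0 h1 ω, h]

lemma IsFairCoinMeasure.two_mul_measure_coding_preimage (hP : IsFairCoinMeasure P) (h0 : 0 ≤ l)
    (h1 : l < 1) {B : Set ℝ} (hB : MeasurableSet B) :
    2 * P (coding l ⁻¹' B) =
      P (coding l ⁻¹' ((fun x => l * x) ⁻¹' B)) +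
        P (coding l ⁻¹' ((fun x => l * (x + 1)) ⁻¹' B)) := by
  have hm : ∀ {f : ℝ → ℝ}, Measurable f → MeasurableSet (coding l ⁻¹' (f ⁻¹' B)) :=
    fun hf => measurable_coding h0 h1 (hf hB)
  have hdisj : Disjoint {ω : ℕ → Bool | ω 0 = false} {ω | ω 0 = true} :=
    disjoint_left.2 fun ω h h' => by simp_all
  rw [coding_preimage_eq_union h0 h1, measure_union
      (hdisj.mono inter_subset_right inter_subset_right)
      ((measurable_shift (hm (by fun_prop))).inter
        (measurableSet_eq_fun (measurable_pi_apply 0) measurable_const)),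
    hP.measure_shift_preimage_inter_head _ (hm (by fun_prop)),
    hP.measure_shift_preimage_inter_head _ (hm (by fun_prop)),
    ← ENNReal.add_div, ENNReal.mul_div_cancel two_ne_zero ofNat_ne_top]

lemma IsFairCoinMeasure.measure_coding_preimage_reflect (hP : IsFairCoinMeasure P) (h0 : 0 ≤ l)
    (h1 : l < 1) {B : Set ℝ} (hB : MeasurableSet B) :
    P (coding l ⁻¹' ((fun x => l / (1 - l) - x) ⁻¹' B)) = P (coding l ⁻¹' B) := by
  have : coding l ⁻¹' ((fun x => l / (1 - l) - x) ⁻¹' B) = flipDigits ⁻¹' (coding l ⁻¹' B) := by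
    ext ω
    simp [coding_flipDigits h0 h1]
  rw [this, hP.measure_flipDigits_preimage (measurable_coding h0 h1 hB)]

lemma IsFairCoinMeasure.two_mul_measure_coding_ge (hP : IsFairCoinMeasure P) (h0 : 0 < l)
    (h1 : l < 1) (t : ℝ) :
    2 * P (coding l ⁻¹' Ici t) =
      P (coding l ⁻¹' Ici (t / l)) + P (coding l ⁻¹' Ici (t / l - 1)) := by
  rw [hP.two_mul_measure_coding_preimage h0.le h1 measurableSet_Ici]
  congr 3 <;> ext x <;> simp only [mem_preimage, mem_Ici, div_le_iff₀' h0, sub_le_iff_le_add]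

lemma IsFairCoinMeasure.one_add_le_two_pow_mul_measure_coding_ge (hP : IsFairCoinMeasure P)
    (h0 : 0 < l) (h1 : l < 1) (n : ℕ) {t : ℝ}
    (ht : t ≤ ∑ i ∈ Finset.range (n + 1), l ^ (i + 1)) :
    1 + P (coding l ⁻¹' Ici 1) ≤ 2 ^ (n + 1) * P (coding l ⁻¹' Ici t) := by
  have := hP.isProbabilityMeasure
  induction n generalizing t with
  | zero =>
    have ht' : t / l ≤ 1 := (div_le_one₀ h0).2 (by simpa using ht)
    have huniv : coding l ⁻¹' Ici (t / l - 1) = univ :=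
      eq_univ_of_forall fun ω => (by linarith : t / l - 1 ≤ 0).trans (coding_nonneg h0.le ω)
    rw [pow_one, hP.two_mul_measure_coding_ge h0 h1, huniv, measure_univ, add_comm]
    gcongr
  | succ n ih =>
    rw [Finset.sum_range_succ_pow_succ, ← div_le_iff₀' h0, ← sub_le_iff_le_add'] at ht
    calc 1 + P (coding l ⁻¹' Ici 1) ≤ 2 ^ (n + 1) * P (coding l ⁻¹' Ici (t / l - 1)) := ih ht
      _ ≤ 2 ^ (n + 1) * (2 * P (coding l ⁻¹' Ici t)) := by
          rw [hP.two_mul_measure_coding_ge h0 h1]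
          gcongr
          exact le_add_self
      _ = 2 ^ (n + 1 + 1) * P (coding l ⁻¹' Ici t) := by ring

lemma IsFairCoinMeasure.one_div_le_measure_coding_ge_one (hP : IsFairCoinMeasure P) (h0 : 0 < l)
    (h1 : l < 1) {m : ℕ} (hm : 1 ≤ ∑ i ∈ Finset.range m, l ^ (i + 1)) :
    1 / (2 ^ m - 1) ≤ P {ω | 1 ≤ coding l ω} := by
  have := hP.isProbabilityMeasure
  obtain ⟨n, rfl⟩ : ∃ n, m = n + 1 :=
    Nat.exists_eq_succ_of_ne_zero (by rintro rfl; norm_num at hm)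
  exact ENNReal.one_div_sub_one_le_of_one_add_le_mul (measure_ne_top _ _)
    (hP.one_add_le_two_pow_mul_measure_coding_ge h0 h1 n hm)

lemma IsFairCoinMeasure.measure_coding_ge_one_le_measure_overlap (hP : IsFairCoinMeasure P)
    (h0 : 0 < l) (h1 : l < 1) :
    P {ω | 1 ≤ coding l ω} ≤ P {ω | coding l ω ∈ Icc l (l ^ 2 / (1 - l))} := by
  change P (coding l ⁻¹' Ici 1) ≤ P (coding l ⁻¹' Icc l (l ^ 2 / (1 - l)))
  have hT : l ^ 2 / (1 - l) = l * (l / (1 - l)) := by ring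
  have hleft : coding l ⁻¹' Ici 1 ⊆
      coding l ⁻¹' ((fun x => l * x) ⁻¹' Icc l (l ^ 2 / (1 - l))) := fun ω (hω : 1 ≤ _) =>
    ⟨le_mul_of_one_le_right h0.le hω, hT ▸ mul_le_mul_of_nonneg_left (coding_le h0.le h1 ω) h0.le⟩
  have hright : coding l ⁻¹' ((fun x => l / (1 - l) - x) ⁻¹' Ici 1) ⊆
      coding l ⁻¹' ((fun x => l * (x + 1)) ⁻¹' Icc l (l ^ 2 / (1 - l))) :=
    fun ω (hω : 1 ≤ l / (1 - l) - coding l ω) =>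
    ⟨le_mul_of_one_le_right h0.le (by linarith [coding_nonneg h0.le ω]),
      hT ▸ mul_le_mul_of_nonneg_left (by linarith) h0.le⟩
  refine (ENNReal.mul_le_mul_iff_right two_ne_zero ofNat_ne_top).1 ?_
  rw [two_mul, hP.two_mul_measure_coding_preimage h0.le h1 measurableSet_Icc]
  gcongr ?_ + ?_
  · exact measure_mono hleft
  · rw [← hP.measure_coding_preimage_reflect h0.le h1 measurableSet_Ici]
    exact measure_mono hright

end Measure

end BernoulliConvolution

open BernoulliConvolution

theorem stmt14_general (l : ℝ) (hl : 1 / 2 < l) (hl1 : l < (Real.sqrt 5 - 1) / 2)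
    (P : Measure (ℕ → Bool))
    (hP : ∀ (n : ℕ) (w : Fin n → Bool),
      P {ω | ∀ k : Fin n, ω k = w k} = (1 / 2) ^ n)
    (pil : (ℕ → Bool) → ℝ)
    (hpil : ∀ ω, pil ω = ∑' k : ℕ, (if ω k then l ^ (k + 1) else 0)) :
    (∃ m : ℕ, 1 ≤ ∑ i ∈ Finset.range m, l ^ (i + 1)) ∧
    ∀ m : ℕ, 1 ≤ ∑ i ∈ Finset.range m, l ^ (i + 1) →
      1 / (2 ^ m - 1) ≤ P {ω | pil ω ∈ Set.Icc l (l ^ 2 / (1 - l))} := by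
  have hP : IsFairCoinMeasure P := hP
  have h0 : 0 < l := by linarith
  have h1 : l < 1 := hl1.trans_le <| by
    nlinarith [Real.sqrt_nonneg 5, Real.sq_sqrt (show (0 : ℝ) ≤ 5 by norm_num)]
  obtain rfl : pil = coding l := funext hpil
  exact ⟨exists_one_le_sum_pow_succ hl h1, fun m hm =>
    (hP.one_div_le_measure_coding_ge_one h0 h1 hm).trans
      (hP.measure_coding_ge_one_le_measure_overlap h0 h1)⟩

/-- Let `λ ∈ (1/2, (√5-1)/2)`. Then there exists `m ∈ ℕ` with
`λ + λ² + ⋯ + λ^m ≥ 1`, and for any such `m` the equilibrium measure of the overlap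
satisfies `μ_λ(τ₀(X_λ) ∩ τ₁(X_λ)) = μ_λ([λ, λ²/(1-λ)]) ≥ 1/(2^m - 1)`, where
`μ_λ(E) = P(π_λ⁻¹(E))`. -/
theorem stmt14 (l : ℝ) (hl : 1 / 2 < l) (hl1 : l < (Real.sqrt 5 - 1) / 2)
    (P : Measure (ℕ → Bool)) [IsProbabilityMeasure P]
    (hP : ∀ (n : ℕ) (w : Fin n → Bool),
      P {ω | ∀ k : Fin n, ω k = w k} = (1 / 2) ^ n)
    (pil : (ℕ → Bool) → ℝ)
    (hpil : ∀ ω, pil ω = ∑' k : ℕ, (if ω k then l ^ (k + 1) else 0)) :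
    (∃ m : ℕ, 1 ≤ ∑ i ∈ Finset.range m, l ^ (i + 1)) ∧
    ∀ m : ℕ, 1 ≤ ∑ i ∈ Finset.range m, l ^ (i + 1) →
      1 / (2 ^ m - 1) ≤ P {ω | pil ω ∈ Set.Icc l (l ^ 2 / (1 - l))} :=
  stmt14_general l hl hl1 P hP pil hpil
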